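/- arXiv:1011.5670 — 3 statements merged into one kernel-verified Lean document; each statement's English description precedes it below -/
import Mathlib

section
/- Let U ⊆ ℝ² be open, let φ : U × ℝ² → ℝ be continuous with φ(x,·) a norm on ℝ² for each x ∈ U, let h : U → ℝ be differentiable with Dh(x)(v) ≤ φ(x,v) for all x ∈ U and v ∈ ℝ², and let γ : [a,b] → U be a curve with h(γ(t)) = t for all t ∈ [a,b]. Then every piecewise C¹ curve γ₁ : [c,d] → U with γ₁(c) = γ(a) and γ₁(d) = γ(b) satisfies ∫_c^d φ(γ₁(t), γ₁'(t)) dt ≥ b − a. In particular γ is a shortest path in U from γ(a) to γ(b) for the length functional c ↦ ∫ φ(c(t), c'(t)) dt. -/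
open Set MeasureTheory

noncomputable section

/-- `ℝ²` with the Euclidean norm. -/
abbrev E2 : Type := EuclideanSpace ℝ (Fin 2)

/-- A map is piecewise `C¹` on `[α, β]` if there is a partition of `[α, β]` into finitely
many subintervals on each of which it is `C¹`. -/
def PiecewiseC1On (c : ℝ → E2) (α β : ℝ) : Prop :=
  ∃ (n : ℕ) (τ : Fin (n + 1) → ℝ), Monotone τ ∧ τ 0 = α ∧ τ (Fin.last n) = β ∧
    ∀ i : Fin n, ContDiffOn ℝ 1 c (Icc (τ i.castSucc) (τ i.succ))

/-! Along a curve `c` in `U`, the chain rule gives `(h ∘ c)' = Dh(c)(c') ≤ φ(c, c')`, so on each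
`C¹` piece the increment of `h ∘ c` is at most the `φ`-length of the piece; summing over the
pieces, the `φ`-length of `c` is at least `h(c(d)) - h(c(c))`, which is `b - a` when `c` joins
`γ(a)` to `γ(b)`. -/

section OnePiece

variable {E : Type*} [NormedAddCommGroup E] [NormedSpace ℝ E] {U : Set E} {L : E → E → ℝ}
  {c : ℝ → E} {α β : ℝ}

theorem ContDiffOn.integrableOn_Icc_apply_deriv
    (hL : ContinuousOn (fun p : E × E => L p.1 p.2) (U ×ˢ univ))
    (hc : ContDiffOn ℝ 1 c (Icc α β)) (hcU : MapsTo c (Icc α β) U) :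
    IntegrableOn (fun t => L (c t) (deriv c t)) (Icc α β) := by
  -- `deriv c` may be junk at the endpoints; on `Ioo` it is the continuous `derivWithin c (Icc α β)`.
  rw [integrableOn_Icc_iff_integrableOn_Ioo]
  rcases lt_or_ge α β with hlt | hle
  · have hc' : ContinuousOn (derivWithin c (Icc α β)) (Icc α β) :=
      hc.continuousOn_derivWithin (uniqueDiffOn_Icc hlt) le_rfl
    have hint : IntegrableOn (fun t => L (c t) (derivWithin c (Icc α β) t)) (Ioo α β) :=
      ((hL.comp (hc.continuousOn.prodMk hc') fun t ht => ⟨hcU ht, mem_univ _⟩)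
        |>.integrableOn_Icc).mono_set Ioo_subset_Icc_self
    refine hint.congr_fun (fun t ht => ?_) measurableSet_Ioo
    dsimp only
    rw [derivWithin_of_mem_nhds (Icc_mem_nhds ht.1 ht.2)]
  · simp [Ioo_eq_empty hle.not_gt]

theorem sub_le_integral_of_fderiv_le {h : E → ℝ} (hdiff : ∀ x ∈ U, DifferentiableAt ℝ h x)
    (hcalib : ∀ x ∈ U, ∀ v, fderiv ℝ h x v ≤ L x v)
    (hL : ContinuousOn (fun p : E × E => L p.1 p.2) (U ×ˢ univ))
    (hc : ContDiffOn ℝ 1 c (Icc α β)) (hcU : MapsTo c (Icc α β) U) (hαβ : α ≤ β) :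
    h (c β) - h (c α) ≤ ∫ t in α..β, L (c t) (deriv c t) := by
  have hcont : ContinuousOn (fun t => h (c t)) (Icc α β) := fun t ht =>
    (hdiff _ (hcU ht)).continuousAt.comp_continuousWithinAt (hc.continuousOn t ht)
  have hderiv : ∀ t ∈ Ioo α β,
      HasDerivAt (fun t => h (c t)) (fderiv ℝ h (c t) (deriv c t)) t := fun t ht =>
    (hdiff _ (hcU (Ioo_subset_Icc_self ht))).hasFDerivAt.comp_hasDerivAt t
      ((hc.differentiableOn one_ne_zero t (Ioo_subset_Icc_self ht)).differentiableAt
        (Icc_mem_nhds ht.1 ht.2)).hasDerivAt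
  exact intervalIntegral.sub_le_integral_of_hasDeriv_right_of_le hαβ hcont
    (fun t ht => (hderiv t ht).hasDerivWithinAt) (hc.integrableOn_Icc_apply_deriv hL hcU)
    fun t ht => hcalib _ (hcU (Ioo_subset_Icc_self ht)) _

end OnePiece

theorem sub_le_integral_of_partition {g f : ℝ → ℝ} :
    ∀ {n : ℕ} (τ : Fin (n + 1) → ℝ),
      (∀ i : Fin n, g (τ i.succ) - g (τ i.castSucc) ≤ ∫ t in τ i.castSucc..τ i.succ, f t) →
      (∀ i : Fin n, IntervalIntegrable f volume (τ i.castSucc) (τ i.succ)) →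
      g (τ (Fin.last n)) - g (τ 0) ≤ ∫ t in τ 0..τ (Fin.last n), f t ∧
        IntervalIntegrable f volume (τ 0) (τ (Fin.last n))
  | 0, τ, _, _ => by simp
  | n + 1, τ, hle, hint => by
    obtain ⟨ih_le, ih_int⟩ := sub_le_integral_of_partition (fun i => τ i.castSucc)
      (fun i => hle i.castSucc) (fun i => hint i.castSucc)
    have hlast_le := hle (Fin.last n)
    have hlast_int := hint (Fin.last n)
    simp only [Fin.castSucc_zero, Fin.succ_last] at *
    refine ⟨?_, ih_int.trans hlast_int⟩
    rw [← intervalIntegral.integral_add_adjacent_intervals ih_int hlast_int]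
    linarith

theorem PiecewiseC1On.le {c : ℝ → E2} {α β : ℝ} (hc : PiecewiseC1On c α β) : α ≤ β := by
  obtain ⟨n, τ, hmono, rfl, rfl, -⟩ := hc
  exact hmono (Fin.zero_le _)

theorem PiecewiseC1On.sub_le_integral {U : Set E2} {L : E2 → E2 → ℝ} {h : E2 → ℝ}
    (hdiff : ∀ x ∈ U, DifferentiableAt ℝ h x) (hcalib : ∀ x ∈ U, ∀ v, fderiv ℝ h x v ≤ L x v)
    (hL : ContinuousOn (fun p : E2 × E2 => L p.1 p.2) (U ×ˢ univ))
    {c : ℝ → E2} {α β : ℝ} (hc : PiecewiseC1On c α β) (hcU : MapsTo c (Icc α β) U) :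
    h (c β) - h (c α) ≤ ∫ t in α..β, L (c t) (deriv c t) := by
  obtain ⟨n, τ, hmono, rfl, rfl, hC1⟩ := hc
  have hpiece (i : Fin n) : MapsTo c (Icc (τ i.castSucc) (τ i.succ)) U :=
    hcU.mono_left (Icc_subset_Icc (hmono (Fin.zero_le _)) (hmono (Fin.le_last _)))
  refine (sub_le_integral_of_partition (g := fun t => h (c t))
    (f := fun t => L (c t) (deriv c t)) τ (fun i => ?_) (fun i => ?_)).1
  · exact sub_le_integral_of_fderiv_le hdiff hcalib hL (hC1 i) (hpiece i)
      (hmono (Fin.castSucc_le_succ i))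
  · exact (intervalIntegrable_iff_integrableOn_Icc_of_le (hmono (Fin.castSucc_le_succ i))).2
      ((hC1 i).integrableOn_Icc_apply_deriv hL (hpiece i))

theorem calibrator_implies_minimizing_general
    (U : Set E2)
    (φ : E2 → E2 → ℝ)
    (hφcont : ContinuousOn (fun p : E2 × E2 => φ p.1 p.2) (U ×ˢ univ))
    (hφnonneg : ∀ x ∈ U, ∀ v, 0 ≤ φ x v)
    (h : E2 → ℝ) (hdiff : ∀ x ∈ U, DifferentiableAt ℝ h x)
    (hcalib : ∀ x ∈ U, ∀ v : E2, fderiv ℝ h x v ≤ φ x v)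
    (a b : ℝ) (γ : ℝ → E2)
    (hγh : ∀ t ∈ Icc a b, h (γ t) = t) :
    ∀ (γ₁ : ℝ → E2) (c d : ℝ), PiecewiseC1On γ₁ c d →
      (∀ t ∈ Icc c d, γ₁ t ∈ U) → γ₁ c = γ a → γ₁ d = γ b →
      b - a ≤ ∫ t in c..d, φ (γ₁ t) (deriv γ₁ t) := by
  intro γ₁ c d hγ₁ hγ₁U hc hd
  rcases le_or_gt a b with hab | hba
  · calc b - a = h (γ₁ d) - h (γ₁ c) := by
          rw [hc, hd, hγh a ⟨le_rfl, hab⟩, hγh b ⟨hab, le_rfl⟩]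
      _ ≤ _ := hγ₁.sub_le_integral hdiff hcalib hφcont hγ₁U
  · have : 0 ≤ ∫ t in c..d, φ (γ₁ t) (deriv γ₁ t) :=
      intervalIntegral.integral_nonneg hγ₁.le fun t ht => hφnonneg _ (hγ₁U t ht) _
    linarith

/-- **Calibrator lemma.** Let `φ(x,·)` be a continuously varying family of norms on an
open set `U ⊆ ℝ²`, `h : U → ℝ` a differentiable calibrator (`Dh(x)(v) ≤ φ(x,v)`), and
`γ : [a,b] → U` a curve with `h(γ(t)) = t`. Then every piecewise `C¹` curve in `U` from
`γ(a)` to `γ(b)` has `φ`-length at least `b − a`; in particular `γ` is a shortest path in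
`U` between its endpoints. -/
theorem calibrator_implies_minimizing
    (U : Set E2) (hU : IsOpen U)
    (φ : E2 → E2 → ℝ)
    (hφcont : ContinuousOn (fun p : E2 × E2 => φ p.1 p.2) (U ×ˢ univ))
    (hφnonneg : ∀ x ∈ U, ∀ v, 0 ≤ φ x v)
    (hφzero : ∀ x ∈ U, ∀ v, φ x v = 0 ↔ v = 0)
    (hφsmul : ∀ x ∈ U, ∀ (c : ℝ) (v : E2), φ x (c • v) = |c| * φ x v)
    (hφadd : ∀ x ∈ U, ∀ v w, φ x (v + w) ≤ φ x v + φ x w)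
    (h : E2 → ℝ) (hdiff : ∀ x ∈ U, DifferentiableAt ℝ h x)
    (hcalib : ∀ x ∈ U, ∀ v : E2, fderiv ℝ h x v ≤ φ x v)
    (a b : ℝ) (γ : ℝ → E2) (hγU : ∀ t ∈ Icc a b, γ t ∈ U)
    (hγh : ∀ t ∈ Icc a b, h (γ t) = t) :
    ∀ (γ₁ : ℝ → E2) (c d : ℝ), PiecewiseC1On γ₁ c d →
      (∀ t ∈ Icc c d, γ₁ t ∈ U) → γ₁ c = γ a → γ₁ d = γ b →
      b - a ≤ ∫ t in c..d, φ (γ₁ t) (deriv γ₁ t) :=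
  calibrator_implies_minimizing_general U φ hφcont hφnonneg h hdiff hcalib a b γ hγh

end
end

section
/- Let V be a finite-dimensional real vector space with a Minkowski norm Φ, let U ⊆ ℝ² be open, S : U → V a C^∞ immersion, I an open interval, and γ : I → U a C^∞ curve such that the curve γ_S = S∘γ satisfies Φ(γ_S'(t)) = 1 for all t. Let W ⊆ U be open, h : W → ℝ a C^∞ function with values in I such that h(γ(t)) = t whenever γ(t) ∈ W, and such that for every x ∈ W one has L_Φ(γ_S'(h(x)))(S(x) − γ_S(h(x))) = 0. Then for every t₀ ∈ I with x₀ := γ(t₀) ∈ W, the derivative of h at x₀ equals the composition of L_Φ(γ_S'(t₀)) with DS(x₀), i.e. Dh(x₀)(v) = L_Φ(γ_S'(t₀))(DS(x₀)·v) for all v ∈ ℝ²; consequently sup{ Dh(x₀)(v) : v ∈ ℝ², Φ(DS(x₀)·v) = 1 } = 1. -/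
open Set

noncomputable section

/-- A Minkowski norm on a real vector space: a norm whose square is `C^∞` away from the
origin with positive definite second derivative at every nonzero point. -/
structure IsMinkowskiNorm {V : Type*} [NormedAddCommGroup V] [NormedSpace ℝ V]
    (Φ : V → ℝ) : Prop where
  nonneg : ∀ v, 0 ≤ Φ v
  eq_zero_iff : ∀ v, Φ v = 0 ↔ v = 0
  smul : ∀ (c : ℝ) (v : V), Φ (c • v) = |c| * Φ v
  add_le : ∀ v w, Φ (v + w) ≤ Φ v + Φ w
  smooth : ContDiffOn ℝ (⊤ : ℕ∞) (fun v => (Φ v) ^ 2) {(0 : V)}ᶜ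
  posdef : ∀ v : V, v ≠ 0 → ∀ w : V, w ≠ 0 →
    0 < iteratedFDeriv ℝ 2 (fun v => (Φ v) ^ 2) v ![w, w]

/-- The Legendre transform of a norm `Φ`: `L_Φ(v) = ½ D(Φ²)(v)`. -/
def legendre {V : Type*} [NormedAddCommGroup V] [NormedSpace ℝ V]
    (Φ : V → ℝ) (v : V) : V →L[ℝ] ℝ :=
  (1 / 2 : ℝ) • fderiv ℝ (fun w => (Φ w) ^ 2) v

/-!
Differentiate the relation `F x = L_Φ(γ_S'(h x)) (S x - γ_S(h x)) = 0` at `x₀ = γ t₀`.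
The vector `S x - γ_S(h x)` vanishes at `x₀`, so only continuity of the covector factor
matters, and `0 = DF(x₀) = L_Φ(c) ∘ (DS(x₀) - c ⊗ Dh(x₀))` with `c = γ_S'(t₀)`; as
`L_Φ(c) c = Φ(c)² = 1`, this is the formula for `Dh(x₀)`. The supremum is then the dual norm
of `L_Φ(c)` on the image of `DS(x₀)`: `L_Φ(c) w ≤ Φ(c) Φ(w)` because
`t ↦ Φ(c + t w)² - (Φ(c) + t Φ(w))²` is maximal on `t ≥ 0` at `t = 0`, and equality holds at
`w = c = DS(x₀) γ'(t₀)`.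
-/

namespace IsMinkowskiNorm

variable {V : Type*} [NormedAddCommGroup V] [NormedSpace ℝ V] {Φ : V → ℝ}

theorem ne_zero_of_eq_one (hΦ : IsMinkowskiNorm Φ) {u : V} (hu : Φ u = 1) : u ≠ 0 := by
  rintro rfl
  simp [(hΦ.eq_zero_iff 0).2 rfl] at hu

theorem contDiffAt_sq (hΦ : IsMinkowskiNorm Φ) {u : V} (hu : u ≠ 0) :
    ContDiffAt ℝ (⊤ : ℕ∞) (fun w => Φ w ^ 2) u :=
  hΦ.smooth.contDiffAt (isOpen_compl_singleton.mem_nhds hu)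

theorem continuousAt_legendre (hΦ : IsMinkowskiNorm Φ) {u : V} (hu : u ≠ 0) :
    ContinuousAt (legendre Φ) u :=
  ((hΦ.contDiffAt_sq hu).continuousAt_fderiv (by simp)).const_smul (1 / 2 : ℝ)

theorem hasDerivAt_sq_add_smul (hΦ : IsMinkowskiNorm Φ) {u : V} (hu : u ≠ 0) (w : V) :
    HasDerivAt (fun t : ℝ => Φ (u + t • w) ^ 2) (2 * legendre Φ u w) 0 := by
  have hline : HasDerivAt (fun t : ℝ => u + t • w) w 0 := by
    simpa using ((hasDerivAt_id (0 : ℝ)).smul_const w).const_add u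
  have hq := ((hΦ.contDiffAt_sq hu).differentiableAt (by simp)).hasFDerivAt
  rw [show 2 * legendre Φ u w = fderiv ℝ (fun w => Φ w ^ 2) u w by simp [legendre]]
  exact hq.comp_hasDerivAt_of_eq 0 hline (by simp)

theorem legendre_apply_self (hΦ : IsMinkowskiNorm Φ) {u : V} (hu : u ≠ 0) :
    legendre Φ u u = Φ u ^ 2 := by
  have hscale : (fun t : ℝ => Φ (u + t • u) ^ 2) = fun t => (1 + t) ^ 2 * Φ u ^ 2 := by
    ext t
    rw [show u + t • u = (1 + t) • u by rw [add_smul, one_smul], hΦ.smul, mul_pow, sq_abs]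
  have hpoly : HasDerivAt (fun t : ℝ => (1 + t) ^ 2 * Φ u ^ 2) (2 * Φ u ^ 2) 0 := by
    simpa using (((hasDerivAt_id (0 : ℝ)).const_add 1).pow 2).mul_const (Φ u ^ 2)
  have hderiv := (hΦ.hasDerivAt_sq_add_smul hu u).unique (hscale ▸ hpoly)
  linarith

theorem legendre_apply_le (hΦ : IsMinkowskiNorm Φ) {u : V} (hu : u ≠ 0) (w : V) :
    legendre Φ u w ≤ Φ u * Φ w := by
  set g : ℝ → ℝ := fun t => Φ (u + t • w) ^ 2 - (Φ u + t * Φ w) ^ 2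
  have hg : HasDerivAt g (2 * legendre Φ u w - 2 * Φ u * Φ w) 0 := by
    have hpoly : HasDerivAt (fun t : ℝ => (Φ u + t * Φ w) ^ 2) (2 * Φ u * Φ w) 0 := by
      simpa using (((hasDerivAt_id (0 : ℝ)).mul_const (Φ w)).const_add (Φ u)).fun_pow 2
    exact (hΦ.hasDerivAt_sq_add_smul hu w).sub hpoly
  have hmax : IsLocalMaxOn g (Ici 0) 0 := by
    refine IsMaxOn.localize fun t (ht : 0 ≤ t) => ?_
    have htri : Φ (u + t • w) ≤ Φ u + t * Φ w := by
      simpa [hΦ.smul, abs_of_nonneg ht] using hΦ.add_le u (t • w)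
    simp only [mem_ofPred_eq, g, zero_smul, add_zero, zero_mul, sub_self, sub_nonpos]
    exact pow_le_pow_left₀ (hΦ.nonneg _) htri 2
  have hnonpos := hmax.hasFDerivWithinAt_nonpos hg.hasFDerivAt.hasFDerivWithinAt
    (mem_posTangentConeAt_of_segment_subset (y := 1) (by simpa using Icc_subset_Ici_self))
  simp only [ContinuousLinearMap.toSpanSingleton_apply, smul_eq_mul, one_mul] at hnonpos
  linarith

theorem sSup_legendre_apply_eq_one (hΦ : IsMinkowskiNorm Φ) {E : Type*} {u : V} (hu : Φ u = 1)
    {T : E → V} (huT : u ∈ range T) :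
    sSup {r : ℝ | ∃ v, Φ (T v) = 1 ∧ legendre Φ u (T v) = r} = 1 := by
  have hu₀ := hΦ.ne_zero_of_eq_one hu
  refine IsGreatest.csSup_eq ⟨?_, ?_⟩
  · obtain ⟨v, rfl⟩ := huT
    exact ⟨v, hu, by rw [hΦ.legendre_apply_self hu₀, hu, one_pow]⟩
  · rintro r ⟨v, hv, rfl⟩
    simpa [hu, hv] using hΦ.legendre_apply_le hu₀ (T v)

end IsMinkowskiNorm

section ImplicitRelation

open Asymptotics Filter Topology

variable {E F G : Type*} [NormedAddCommGroup E] [NormedSpace ℝ E] [NormedAddCommGroup F]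
  [NormedSpace ℝ F] [NormedAddCommGroup G] [NormedSpace ℝ G]

/-- Unlike `HasFDerivAt.clm_apply`, only continuity of the operator is needed, because the
vector it is applied to vanishes at the base point. -/
theorem HasFDerivAt.clm_apply_of_continuousAt_of_eq_zero {A : E → F →L[ℝ] G} {B : E → F}
    {B' : E →L[ℝ] F} {x₀ : E} (hA : ContinuousAt A x₀) (hB : HasFDerivAt B B' x₀)
    (hB₀ : B x₀ = 0) : HasFDerivAt (fun x => A x (B x)) ((A x₀).comp B') x₀ := by
  rw [hasFDerivAt_iff_isLittleO] at hB ⊢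
  have hsplit : ∀ x, A x (B x) - A x₀ (B x₀) - (A x₀).comp B' (x - x₀)
      = A x (B x - B x₀ - B' (x - x₀)) + (A x - A x₀) (B' (x - x₀)) := by
    intro x
    rw [hB₀, map_zero, sub_zero, sub_zero, ContinuousLinearMap.comp_apply, (A x).map_sub,
      sub_apply]
    abel
  simp_rw [hsplit]
  refine IsLittleO.add ?_ ?_
  · have hbdd : (fun x => ‖A x‖) =O[𝓝 x₀] fun _ => (1 : ℝ) :=
      hA.norm.isBigO_one ℝ
    refine (isBoundedBilinearMap_apply.isBigO_comp).trans_isLittleO ?_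
    simpa using hbdd.mul_isLittleO hB.norm_norm
  · have hsmall : (fun x => ‖A x - A x₀‖) =o[𝓝 x₀] fun _ => (1 : ℝ) :=
      (isLittleO_one_iff ℝ).2 (tendsto_sub_nhds_zero_iff.2 hA) |>.norm_left
    refine (isBoundedBilinearMap_apply.isBigO_comp).trans_isLittleO ?_
    simpa using hsmall.mul_isBigO ((B'.isBigO_sub (𝓝 x₀) x₀).norm_norm)

theorem HasFDerivAt.eq_comp_of_implicit {A : E → F →L[ℝ] ℝ} {S : E → F} {σ : ℝ → F}
    {h : E → ℝ} {S' : E →L[ℝ] F} {h' : E →L[ℝ] ℝ} {c : F} {x₀ : E}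
    (hh : HasFDerivAt h h' x₀) (hA : ContinuousAt A x₀) (hS : HasFDerivAt S S' x₀)
    (hσ : HasDerivAt σ c (h x₀)) (hσS : σ (h x₀) = S x₀) (hAc : A x₀ c = 1)
    (himpl : ∀ᶠ x in 𝓝 x₀, A x (S x - σ (h x)) = 0) : h' = (A x₀).comp S' := by
  have hB : HasFDerivAt (fun x => S x - σ (h x)) (S' - (ContinuousLinearMap.smulRight
      (1 : ℝ →L[ℝ] ℝ) c).comp h') x₀ := hS.sub (hσ.hasFDerivAt.comp x₀ hh)
  have hzero := (hB.clm_apply_of_continuousAt_of_eq_zero hA (by rw [hσS, sub_self])).unique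
    ((hasFDerivAt_const 0 x₀).congr_of_eventuallyEq himpl)
  ext v
  have hv := DFunLike.congr_fun hzero v
  simp only [ContinuousLinearMap.comp_apply, sub_apply, map_sub,
    ContinuousLinearMap.smulRight_apply, one_apply_eq_self, map_smul, hAc,
    smul_eq_mul, mul_one, zero_apply, sub_eq_zero] at hv ⊢
  exact hv.symm

end ImplicitRelation

theorem fderiv_of_implicit_calibrator_general
    {V : Type*} [NormedAddCommGroup V] [NormedSpace ℝ V]
    (Φ : V → ℝ) (hΦ : IsMinkowskiNorm Φ)
    (U : Set E2)
    (S : E2 → V) (hS : ContDiffOn ℝ (⊤ : ℕ∞) S U)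
    (I : Set ℝ) (hIopen : IsOpen I)
    (γ : ℝ → E2) (hγsmooth : ContDiffOn ℝ (⊤ : ℕ∞) γ I) (hγU : MapsTo γ I U)
    (hunit : ∀ t ∈ I, Φ (deriv (fun s => S (γ s)) t) = 1)
    (W : Set E2) (hW : IsOpen W) (hWU : W ⊆ U)
    (h : E2 → ℝ) (hh : ContDiffOn ℝ (⊤ : ℕ∞) h W)
    (hhγ : ∀ t ∈ I, γ t ∈ W → h (γ t) = t)
    (himpl : ∀ x ∈ W,
      legendre Φ (deriv (fun s => S (γ s)) (h x)) (S x - S (γ (h x))) = 0) :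
    ∀ t₀ ∈ I, γ t₀ ∈ W →
      (∀ v : E2, fderiv ℝ h (γ t₀) v
          = legendre Φ (deriv (fun s => S (γ s)) t₀) (fderiv ℝ S (γ t₀) v)) ∧
      sSup {r : ℝ | ∃ v : E2, Φ (fderiv ℝ S (γ t₀) v) = 1 ∧ fderiv ℝ h (γ t₀) v = r}
        = 1 := by
  intro t₀ ht₀ hx₀
  set σ : ℝ → V := fun s => S (γ s)
  have hσ : ContDiffOn ℝ (⊤ : ℕ∞) σ I := hS.comp hγsmooth hγU
  have ht : h (γ t₀) = t₀ := hhγ t₀ ht₀ hx₀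
  have hc : Φ (deriv σ t₀) = 1 := hunit t₀ ht₀
  have hc₀ := hΦ.ne_zero_of_eq_one hc
  have hSx : DifferentiableAt ℝ S (γ t₀) :=
    ((hS.mono hWU).contDiffAt (hW.mem_nhds hx₀)).differentiableAt (by simp)
  have hhx : DifferentiableAt ℝ h (γ t₀) :=
    (hh.contDiffAt (hW.mem_nhds hx₀)).differentiableAt (by simp)
  have hσt : DifferentiableAt ℝ σ t₀ :=
    (hσ.contDiffAt (hIopen.mem_nhds ht₀)).differentiableAt (by simp)
  have hγt : DifferentiableAt ℝ γ t₀ :=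
    (hγsmooth.contDiffAt (hIopen.mem_nhds ht₀)).differentiableAt (by simp)
  have hσ' : ContinuousAt (deriv σ) t₀ :=
    (hσ.continuousOn_deriv_of_isOpen hIopen (by simp)).continuousAt (hIopen.mem_nhds ht₀)
  have hA : ContinuousAt (fun x => legendre Φ (deriv σ (h x))) (γ t₀) :=
    (hΦ.continuousAt_legendre hc₀).comp_of_eq (hσ'.comp_of_eq hhx.continuousAt ht) (by rw [ht])
  have hDh : fderiv ℝ h (γ t₀) = (legendre Φ (deriv σ t₀)).comp (fderiv ℝ S (γ t₀)) := by
    simpa only [ht] using hhx.hasFDerivAt.eq_comp_of_implicit hA hSx.hasFDerivAt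
      (ht ▸ hσt.hasDerivAt) (by rw [ht]) (by rw [ht, hΦ.legendre_apply_self hc₀, hc, one_pow])
      (Filter.eventually_of_mem (hW.mem_nhds hx₀) himpl)
  refine ⟨fun v => by rw [hDh]; rfl, ?_⟩
  simp only [hDh, ContinuousLinearMap.comp_apply]
  exact hΦ.sSup_legendre_apply_eq_one hc
    ⟨deriv γ t₀, (hSx.hasFDerivAt.comp_hasDerivAt t₀ hγt.hasDerivAt).deriv.symm⟩

/-- **Lemma 2.3 (Burago–Ivanov).** Let `S : U → V` be a smooth immersion into a space
with a Minkowski norm `Φ`, `γ : I → U` a curve whose image `γ_S = S∘γ` is unit-speed, and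
`h` a smooth function defined near `γ` with `h(γ(t)) = t`, whose level sets satisfy the
implicit relation `L_Φ(γ_S'(h(x)))(S(x) − γ_S(h(x))) = 0`. Then at every point
`x₀ = γ(t₀)` of the curve, `Dh(x₀) = L_Φ(γ_S'(t₀)) ∘ DS(x₀)`; consequently the induced
dual norm of `Dh(x₀)` equals `1`. -/
theorem fderiv_of_implicit_calibrator
    {V : Type*} [NormedAddCommGroup V] [NormedSpace ℝ V] [FiniteDimensional ℝ V]
    (Φ : V → ℝ) (hΦ : IsMinkowskiNorm Φ)
    (U : Set E2) (hU : IsOpen U)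
    (S : E2 → V) (hS : ContDiffOn ℝ (⊤ : ℕ∞) S U)
    (hSimm : ∀ x ∈ U, Function.Injective (fderiv ℝ S x))
    (I : Set ℝ) (hIopen : IsOpen I) (hIconn : I.OrdConnected)
    (γ : ℝ → E2) (hγsmooth : ContDiffOn ℝ (⊤ : ℕ∞) γ I) (hγU : MapsTo γ I U)
    (hunit : ∀ t ∈ I, Φ (deriv (fun s => S (γ s)) t) = 1)
    (W : Set E2) (hW : IsOpen W) (hWU : W ⊆ U)
    (h : E2 → ℝ) (hh : ContDiffOn ℝ (⊤ : ℕ∞) h W) (hhI : MapsTo h W I)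
    (hhγ : ∀ t ∈ I, γ t ∈ W → h (γ t) = t)
    (himpl : ∀ x ∈ W,
      legendre Φ (deriv (fun s => S (γ s)) (h x)) (S x - S (γ (h x))) = 0) :
    ∀ t₀ ∈ I, γ t₀ ∈ W →
      (∀ v : E2, fderiv ℝ h (γ t₀) v
          = legendre Φ (deriv (fun s => S (γ s)) t₀) (fderiv ℝ S (γ t₀) v)) ∧
      sSup {r : ℝ | ∃ v : E2, Φ (fderiv ℝ S (γ t₀) v) = 1 ∧ fderiv ℝ h (γ t₀) v = r}
        = 1 :=
  fderiv_of_implicit_calibrator_general Φ hΦ U S hS I hIopen γ hγsmooth hγU hunit W hW hWU h hh hhγ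
    himpl

end
end

section
/- Let V be a real normed space and let v ∈ V with ‖v‖ = 1 be a point at which the norm function is differentiable, with derivative D‖·‖(v) ∈ V*. If L ∈ V* satisfies ‖L‖* ≤ 1 and L(v) = 1, then L = D‖·‖(v). In other words, at a point of differentiability of the norm on the unit sphere, the derivative of the norm is the unique supporting functional: the unique L ∈ V* with dual norm 1 attaining the value 1 at v. -/
/-! A functional `L` with `‖L‖ ≤ 1` lies below the norm everywhere and touches it at `v`, so
`‖·‖ - L` has a minimum at `v`; at a point of differentiability its derivative vanishes there. -/

open Filter Topology

theorem HasFDerivAt.eq_of_eventually_le_of_eq {E : Type*} [NormedAddCommGroup E]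
    [NormedSpace ℝ E] {g : E → ℝ} {g' L : E →L[ℝ] ℝ} {x : E} (hg : HasFDerivAt g g' x)
    (hle : ∀ᶠ y in 𝓝 x, L y ≤ g y) (heq : L x = g x) : L = g' := by
  have hmin : IsLocalMin (fun y => g y - L y) x :=
    hle.mono fun y hy => by simpa [heq] using hy
  have hzero : g' - L = 0 := hmin.hasFDerivAt_eq_zero (hg.sub L.hasFDerivAt)
  exact (sub_eq_zero.mp hzero).symm

theorem ContinuousLinearMap.apply_le_norm_of_opNorm_le_one {E : Type*} [SeminormedAddCommGroup E]
    [NormedSpace ℝ E] {L : E →L[ℝ] ℝ} (hL : ‖L‖ ≤ 1) (y : E) : L y ≤ ‖y‖ :=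
  calc L y ≤ ‖L y‖ := le_abs_self _
    _ ≤ 1 * ‖y‖ := L.le_of_opNorm_le hL y
    _ = ‖y‖ := one_mul _

/-- At a point of differentiability of the norm on the unit sphere of a real normed
space, the derivative of the norm is the unique supporting functional: if `‖v‖ = 1`,
the norm is differentiable at `v`, and `L` is a continuous linear functional with dual
norm `‖L‖ ≤ 1` and `L v = 1`, then `L` equals the derivative of the norm at `v`. -/
theorem supporting_functional_unique {V : Type*} [NormedAddCommGroup V] [NormedSpace ℝ V]
    (v : V) (hv : ‖v‖ = 1) (hd : DifferentiableAt ℝ (fun x : V => ‖x‖) v)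
    (L : V →L[ℝ] ℝ) (hL : ‖L‖ ≤ 1) (hLv : L v = 1) :
    L = fderiv ℝ (fun x : V => ‖x‖) v :=
  hd.hasFDerivAt.eq_of_eventually_le_of_eq
    (Eventually.of_forall (L.apply_le_norm_of_opNorm_le_one hL)) (hLv.trans hv.symm)
end
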